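/- Let d ≥ 2, R > 0, let σ denote the surface measure on the unit sphere S^{d-1} ⊆ ℝ^d, and let λ denote Lebesgue measure on the interval (−R, R). Let α be a finite signed Borel measure on S^{d-1} × (−R, R). Suppose there is a sequence (h_m)_{m≥1} of functions on S^{d-1} × (−R, R), each of which is a finite linear combination of functions of the form (ω, b) ↦ P(ω) · b^{k'} where P : ℝ^d → ℝ is a harmonic homogeneous polynomial of degree k and k, k' are nonnegative integers with k ≡ k' (mod 2) and k' < k − 2, such that for every bounded continuous function ψ : S^{d-1} × (−R, R) → ℝ one has ∫ ψ(ω, b) h_m(ω, b) d(σ ⊗ λ)(ω, b) → ∫ ψ dα as m → ∞. Then for every x in the open ball B_R: ∫_{S^{d-1} × (−R, R)} (⟨ω, x⟩ − b)_+ dα(ω, b) = 0. -/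

import Mathlib

/-!
Integrating the ReLU ridge function against `b ^ k'` over `b ∈ (-R, R)` leaves a polynomial of
degree `k' + 2 < k` in `⟪ω, x⟫`, so it suffices that a harmonic homogeneous polynomial `P` of
degree `k` is orthogonal on the sphere to `⟪·, x⟫ ^ j` for `j < k`; the vanishing then passes to
the weak limit `α`.

Rotation invariance of the Hausdorff measure, differentiated along `t ↦ exp (t J)`, gives
`∫ (X i ∂ⱼ - X j ∂ᵢ) F = 0`. Summing over `F = X j * f` and using `∑ X j ^ 2 = 1` on the sphere
yields `(n + d - 1) ∫ X i f = ∫ ∂ᵢ f` for `f` homogeneous of degree `n`. Writing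
`P ⟪·, x⟫ ^ (j + 1) = ∑ xᵢ X i (P ⟪·, x⟫ ^ j)` and noting that each `∂ᵢ P` is again harmonic,
the orthogonality follows by induction on `j`, starting from `k (k + d - 2) ∫ P = ∫ ΔP = 0`.
-/

open MeasureTheory Filter
open scoped RealInnerProductSpace Topology

/-- Integral of a real function against a finite signed measure, via its Jordan decomposition. -/
noncomputable def sInt {X : Type*} [MeasurableSpace X] (α : SignedMeasure X) (f : X → ℝ) : ℝ :=
  (∫ x, f x ∂α.toJordanDecomposition.posPart) - ∫ x, f x ∂α.toJordanDecomposition.negPart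

/-- The surface measure on the unit sphere of `ℝ^d`: the `(d-1)`-dimensional Hausdorff
measure on the sphere. -/
noncomputable def sphereMeasure (d : ℕ) :
    Measure (Metric.sphere (0 : EuclideanSpace ℝ (Fin d)) 1) :=
  μH[(d : ℝ) - 1]

/-- The set of functions `(ω, b) ↦ P(ω) · b^{k'}` on `S^{d-1} × ℝ`, where `P` is a harmonic
homogeneous polynomial of degree `k`, and `k ≡ k' (mod 2)` with `k' < k - 2`. -/
def basicSet (d : ℕ) :
    Set ((Metric.sphere (0 : EuclideanSpace ℝ (Fin d)) 1 × ℝ) → ℝ) :=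
  {g | ∃ (k k' : ℕ) (P : MvPolynomial (Fin d) ℝ),
    P.IsHomogeneous k ∧
    (∑ j : Fin d, MvPolynomial.pderiv j (MvPolynomial.pderiv j P)) = 0 ∧
    k % 2 = k' % 2 ∧ k' + 2 < k ∧
    g = fun p => MvPolynomial.eval (fun j => (p.1 : EuclideanSpace ℝ (Fin d)) j) P * p.2 ^ k'}

open MvPolynomial Metric Module
open scoped ENNReal

namespace MvPolynomial

variable {σ R : Type*} [CommRing R]

lemma pderiv_pderiv_comm (i j : σ) (f : MvPolynomial σ R) :
    pderiv i (pderiv j f) = pderiv j (pderiv i f) := by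
  classical
  rw [← sub_eq_zero, ← Derivation.commutator_apply]
  suffices h : ⁅pderiv i, pderiv j⁆ = (0 : Derivation R (MvPolynomial σ R) _) by
    rw [h, Derivation.zero_apply]
  refine derivation_ext fun l => ?_
  simp only [Derivation.commutator_apply, pderiv_X, Pi.single_apply]
  split_ifs <;> simp

lemma eval_polynomial_aeval (v : σ → R) (ℓ : MvPolynomial σ R) (q : Polynomial R) :
    eval v (Polynomial.aeval ℓ q) = q.eval (eval v ℓ) := by
  simpa using (Polynomial.aeval_algHom_apply (aeval v) ℓ q).symm

variable [Fintype σ]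

noncomputable def euler : Derivation R (MvPolynomial σ R) (MvPolynomial σ R) :=
  ∑ i : σ, (X i : MvPolynomial σ R) • pderiv i

noncomputable def laplacian (f : MvPolynomial σ R) : MvPolynomial σ R :=
  ∑ i, pderiv i (pderiv i f)

lemma euler_apply (f : MvPolynomial σ R) : euler f = ∑ i, X i * pderiv i f := by
  rw [euler, ← Derivation.coeFnAddMonoidHom_apply, map_sum, Finset.sum_apply]
  simp [Derivation.smul_apply]

lemma euler_X (i : σ) : euler (X i : MvPolynomial σ R) = X i := by
  classical
  simp [euler_apply, Pi.single_apply]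

lemma IsHomogeneous.euler_eq {f : MvPolynomial σ R} {n : ℕ} (hf : f.IsHomogeneous n) :
    euler f = n • f := by
  rw [f.as_sum, map_sum, Finset.smul_sum]
  refine Finset.sum_congr rfl fun m hm => ?_
  simp_rw [euler_apply, X_mul_pderiv_monomial, ← Finset.sum_smul]
  congr 1
  rw [← hf (mem_support_iff.mp hm), Finsupp.weight_apply]
  simp [Finsupp.sum_fintype]

lemma pderiv_euler (i : σ) (f : MvPolynomial σ R) :
    pderiv i (euler f) = euler (pderiv i f) + pderiv i f := by
  classical
  rw [← sub_eq_iff_eq_add', ← Derivation.commutator_apply]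
  suffices h : ⁅pderiv i, euler⁆ = (pderiv i : Derivation R (MvPolynomial σ R) _) by rw [h]
  refine derivation_ext fun l => ?_
  simp only [Derivation.commutator_apply, euler_X, pderiv_X, Pi.single_apply]
  split_ifs <;> simp [euler_apply]

lemma euler_pderiv_of_eq {f : MvPolynomial σ R} {c : R} (hf : euler f = c • f) (i : σ) :
    euler (pderiv i f) = (c - 1) • pderiv i f := by
  rw [eq_sub_of_add_eq (pderiv_euler i f).symm, hf, Derivation.map_smul, sub_smul, one_smul]

lemma laplacian_pderiv (i : σ) (f : MvPolynomial σ R) :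
    laplacian (pderiv i f) = pderiv i (laplacian f) := by
  simp only [laplacian, map_sum, pderiv_pderiv_comm i]

lemma euler_mul_of_eq {f g : MvPolynomial σ R} {a b : R} (hf : euler f = a • f)
    (hg : euler g = b • g) : euler (f * g) = (a + b) • (f * g) := by
  rw [Derivation.leibniz, hf, hg, smul_eq_mul, smul_eq_mul, add_smul, mul_smul_comm,
    mul_smul_comm, mul_comm g, add_comm]

lemma euler_pow_of_eq {f : MvPolynomial σ R} {a : R} (hf : euler f = a • f) (n : ℕ) :
    euler (f ^ n) = (n * a) • f ^ n := by
  induction n with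
  | zero => simp
  | succ n ih => rw [pow_succ, euler_mul_of_eq ih hf]; push_cast; ring_nf

lemma pderiv_linear (x : σ → R) (i : σ) :
    pderiv i (∑ m, x m • X m : MvPolynomial σ R) = C (x i) := by
  classical
  simp [Pi.single_apply, smul_eq_C_mul]

lemma euler_linear (x : σ → R) :
    euler (∑ i, x i • X i : MvPolynomial σ R) = (1 : R) • ∑ i, x i • X i := by
  simp [euler_X]

end MvPolynomial

section SphericalFunctional

variable {σ : Type*} [Fintype σ]

/-- Abstracts `F ↦ ∫ F dμ` for a rotation-invariant measure `μ` on the unit sphere: the angular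
derivatives `X i ∂ⱼ - X j ∂ᵢ` integrate to zero, and `∑ X i ^ 2 = 1` on the support of `μ`. -/
structure IsSphericalFunctional (φ : MvPolynomial σ ℝ →ₗ[ℝ] ℝ) : Prop where
  angular : ∀ i j f, φ (X i * pderiv j f) = φ (X j * pderiv i f)
  radial : ∀ f, φ ((∑ i, X i ^ 2) * f) = φ f

namespace IsSphericalFunctional

variable {φ : MvPolynomial σ ℝ →ₗ[ℝ] ℝ}

/-- Sum the angular relation over `X m * f`; the radial relation removes the factor `∑ X m ^ 2`. -/
lemma map_X_mul_euler (hφ : IsSphericalFunctional φ) (i : σ) (f : MvPolynomial σ ℝ) :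
    φ (X i * euler f) + (Fintype.card σ - 1 : ℝ) * φ (X i * f) = φ (pderiv i f) := by
  classical
  have h := Finset.sum_congr rfl fun m (_ : m ∈ Finset.univ) => hφ.angular i m (X m * f)
  rw [← map_sum, ← map_sum] at h
  have e₁ : ∑ m, X i * pderiv m (X m * f) =
      X i * euler f + (Fintype.card σ : ℝ) • (X i * f) := by
    simp [mul_add, Finset.sum_add_distrib, euler_apply, Finset.mul_sum, Nat.cast_smul_eq_nsmul]
  have e₂ : ∑ m, X m * pderiv i (X m * f) = X i * f + (∑ m, X m ^ 2) * pderiv i f := by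
    simp [mul_add, Finset.sum_add_distrib, Pi.single_apply, Finset.sum_mul, sq, mul_assoc,
      add_comm]
  rw [e₁, e₂, map_add, map_add, hφ.radial, map_smul, smul_eq_mul] at h
  linear_combination h

lemma map_X_mul_of_euler_eq (hφ : IsSphericalFunctional φ) (i : σ) {f : MvPolynomial σ ℝ}
    {c : ℝ} (hf : euler f = c • f) :
    (c + Fintype.card σ - 1) * φ (X i * f) = φ (pderiv i f) := by
  rw [← hφ.map_X_mul_euler, hf, mul_smul_comm, map_smul, smul_eq_mul]
  ring

lemma map_eq_zero_of_laplacian_eq_zero (hφ : IsSphericalFunctional φ)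
    (hσ : 2 ≤ Fintype.card σ) {P : MvPolynomial σ ℝ} {c : ℝ} (hc : 1 ≤ c)
    (hP : euler P = c • P) (hΔ : laplacian P = 0) : φ P = 0 := by
  have hσ' : (2 : ℝ) ≤ Fintype.card σ := by exact_mod_cast hσ
  have hstep : ∀ i, (c + Fintype.card σ - 2) * φ (X i * pderiv i P) =
      φ (pderiv i (pderiv i P)) := fun i => by
    rw [← hφ.map_X_mul_of_euler_eq i (euler_pderiv_of_eq hP i)]
    ring_nf
  have h : (c + Fintype.card σ - 2) * c * φ P = 0 := by
    rw [mul_assoc, ← smul_eq_mul c, ← map_smul, ← hP, euler_apply, map_sum, Finset.mul_sum]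
    simp_rw [hstep, ← map_sum]
    exact (congrArg φ hΔ).trans (map_zero φ)
  have hne : (c + Fintype.card σ - 2) * c ≠ 0 := mul_ne_zero (by linarith) (by linarith)
  exact (mul_eq_zero.mp h).resolve_left hne

lemma map_X_mul_mul_pow (hφ : IsSphericalFunctional φ) (x : σ → ℝ) {P : MvPolynomial σ ℝ}
    {c : ℝ} (hP : euler P = c • P) (i : σ) (j : ℕ) :
    (c + j + Fintype.card σ - 1) * φ (X i * (P * (∑ l, x l • X l) ^ j)) =
      φ (pderiv i P * (∑ l, x l • X l) ^ j) + j * x i * φ (P * (∑ l, x l • X l) ^ (j - 1)) := by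
  have hQ := euler_mul_of_eq hP (euler_pow_of_eq (euler_linear x) j)
  rw [mul_one] at hQ
  have hC : P * ((j : MvPolynomial σ ℝ) * (∑ l, x l • X l) ^ (j - 1) * C (x i)) =
      (j * x i) • (P * (∑ l, x l • X l) ^ (j - 1)) := by
    rw [smul_eq_C_mul, map_mul, map_natCast]
    ring
  rw [hφ.map_X_mul_of_euler_eq i hQ, pderiv_mul, pderiv_pow, pderiv_linear, map_add, hC,
    map_smul, smul_eq_mul]

/-- Each step trades a factor `X i` of `⟪·, x⟫ ^ (j + 1)` for `∂ᵢ`, which lowers either the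
degree of `P` or the power of `⟪·, x⟫`. -/
theorem map_mul_pow_eq_zero (hφ : IsSphericalFunctional φ) (hσ : 2 ≤ Fintype.card σ)
    (x : σ → ℝ) {j k : ℕ} (hjk : j < k) {P : MvPolynomial σ ℝ} (hP : euler P = (k : ℝ) • P)
    (hΔ : laplacian P = 0) : φ (P * (∑ i, x i • X i) ^ j) = 0 := by
  induction j using Nat.strong_induction_on generalizing k P with
  | _ j ih =>
  rcases j with _ | j
  · rw [pow_zero, mul_one]
    exact hφ.map_eq_zero_of_laplacian_eq_zero hσ (by exact_mod_cast hjk) hP hΔ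
  have hX : ∀ i, φ (X i * (P * (∑ l, x l • X l) ^ j)) = 0 := fun i => by
    have hPi : euler (pderiv i P) = ((k - 1 : ℕ) : ℝ) • pderiv i P := by
      rw [euler_pderiv_of_eq hP, Nat.cast_sub (by omega), Nat.cast_one]
    have h := hφ.map_X_mul_mul_pow x hP i j
    rw [ih j (by omega) (by omega) hPi (by rw [laplacian_pderiv, hΔ, map_zero]),
      ih (j - 1) (by omega) (by omega) hP hΔ, mul_zero, add_zero] at h
    have hσ' : (2 : ℝ) ≤ Fintype.card σ := by exact_mod_cast hσ
    have hj : (0 : ℝ) ≤ j := j.cast_nonneg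
    have hk : (1 : ℝ) ≤ k := by exact_mod_cast (by omega : 1 ≤ k)
    exact (mul_eq_zero.mp h).resolve_left (by linarith)
  rw [pow_succ, ← mul_assoc, Finset.mul_sum, map_sum]
  exact Finset.sum_eq_zero fun i _ => by rw [mul_smul_comm, map_smul, mul_comm, hX, smul_zero]

theorem map_mul_aeval_eq_zero (hφ : IsSphericalFunctional φ) (hσ : 2 ≤ Fintype.card σ)
    (x : σ → ℝ) {k : ℕ} {P : MvPolynomial σ ℝ} (hP : euler P = (k : ℝ) • P)
    (hΔ : laplacian P = 0) {q : Polynomial ℝ} (hq : q.natDegree < k) :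
    φ (P * Polynomial.aeval (∑ i, x i • X i) q) = 0 := by
  rw [Polynomial.aeval_eq_sum_range, Finset.mul_sum, map_sum]
  refine Finset.sum_eq_zero fun j hj => ?_
  rw [Finset.mem_range] at hj
  rw [mul_smul_comm, map_smul, hφ.map_mul_pow_eq_zero hσ x (by omega) hP hΔ, smul_zero]

end IsSphericalFunctional

end SphericalFunctional

lemma LocallyLipschitz.hausdorffMeasure_image_lt_top {W X : Type*} [NormedAddCommGroup W]
    [NormedSpace ℝ W] [FiniteDimensional ℝ W] [MeasurableSpace W] [BorelSpace W]
    [MetricSpace X] [MeasurableSpace X] [BorelSpace X] {f : W → X} (hf : LocallyLipschitz f)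
    {C : Set W} (hC : IsCompact C) : μH[finrank ℝ W] (f '' C) < ∞ := by
  obtain ⟨K, hK⟩ := hf.locallyLipschitzOn.exists_lipschitzOnWith_of_compact hC
  exact (hK.hausdorffMeasure_image_le (Nat.cast_nonneg _)).trans_lt
    (ENNReal.mul_lt_top (by simp) hC.measure_lt_top)

section Sphere

variable {E : Type*} [NormedAddCommGroup E] [InnerProductSpace ℝ E]

def LinearIsometryEquiv.restrictSphere (e : E ≃ₗᵢ[ℝ] E) :
    sphere (0 : E) 1 ≃ᵢ sphere (0 : E) 1 where
  toEquiv := e.toEquiv.subtypeEquiv fun x => by simp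
  isometry_toFun := fun x y => e.isometry.edist_eq x y

lemma innerSL_smulRight_sub_mem_skewAdjoint [CompleteSpace E] (a b : E) :
    (innerSL ℝ a).smulRight b - (innerSL ℝ b).smulRight a ∈ skewAdjoint (E →L[ℝ] E) := by
  rw [skewAdjoint.mem_iff, ContinuousLinearMap.star_eq_adjoint]
  refine ((ContinuousLinearMap.eq_adjoint_iff _ _).mpr fun x y => ?_).symm
  simp only [neg_apply, sub_apply, ContinuousLinearMap.smulRight_apply, innerSL_apply_apply,
    inner_neg_left, inner_sub_left, inner_sub_right, inner_smul_left, inner_smul_right,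
    real_inner_comm, RCLike.conj_to_real]
  ring

variable [FiniteDimensional ℝ E] [MeasurableSpace E] [BorelSpace E]

/-- The closed hemisphere opposite to `u` is the image of a compact set under the smooth inverse
stereographic projection from `u`. -/
lemma hausdorffMeasure_sphere_inter_inner_nonpos_lt_top {u : E} (hu : ‖u‖ = 1) :
    μH[finrank ℝ E - 1] (sphere (0 : E) 1 ∩ {x | ⟪u, x⟫ ≤ 0}) < ∞ := by
  set K := sphere (0 : E) 1 ∩ {x | ⟪u, x⟫ ≤ 0}
  have hfinrank : (finrank ℝ E : ℝ) - 1 = finrank ℝ (ℝ ∙ u)ᗮ := by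
    have := (ℝ ∙ u).finrank_add_finrank_orthogonal
    rw [finrank_span_singleton (by rintro rfl; simp at hu)] at this
    rw [← this]
    push_cast
    ring
  have hK : IsCompact K :=
    (isCompact_sphere 0 1).inter_right (isClosed_le (by fun_prop) continuous_const)
  have hC : IsCompact (stereoToFun u '' K) :=
    hK.image_of_continuousOn (continuousOn_stereoToFun.mono fun x hx => by
      have : ⟪u, x⟫ ≤ 0 := hx.2
      simp only [Set.mem_ofPred_eq, innerSL_apply_apply]
      linarith)
  have hsub : K ⊆ (stereoInvFunAux u ∘ (↑)) '' (stereoToFun u '' K) := by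
    rintro x ⟨hx, hxu⟩
    have hne : x ≠ u := by
      rintro rfl
      simp only [Set.mem_ofPred_eq, real_inner_self_eq_norm_sq, hu] at hxu
      norm_num at hxu
    refine ⟨stereoToFun u x, ⟨x, ⟨hx, hxu⟩, rfl⟩, ?_⟩
    simpa using congrArg Subtype.val (stereo_left_inv hu (x := ⟨x, hx⟩) hne)
  rw [hfinrank]
  refine (measure_mono hsub).trans_lt (LocallyLipschitz.hausdorffMeasure_image_lt_top ?_ hC)
  exact ((contDiff_stereoInvFunAux (m := 1)).comp (ℝ ∙ u)ᗮ.subtypeL.contDiff).locallyLipschitz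

lemma hausdorffMeasure_sphere_lt_top : μH[finrank ℝ E - 1] (sphere (0 : E) 1) < ∞ := by
  rcases (sphere (0 : E) 1).eq_empty_or_nonempty with h | ⟨v, hv⟩
  · simp [h]
  have hv : ‖v‖ = 1 := mem_sphere_zero_iff_norm.mp hv
  have hcover : sphere (0 : E) 1 ⊆
      (sphere 0 1 ∩ {x | ⟪v, x⟫ ≤ 0}) ∪ (sphere 0 1 ∩ {x | ⟪-v, x⟫ ≤ 0}) := fun x hx => by
    rcases le_total ⟪v, x⟫ 0 with h | h
    · exact Or.inl ⟨hx, h⟩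
    · exact Or.inr ⟨hx, by simpa [inner_neg_left] using h⟩
  exact (measure_mono hcover).trans_lt <| (measure_union_le _ _).trans_lt <|
    ENNReal.add_lt_top.mpr ⟨hausdorffMeasure_sphere_inter_inner_nonpos_lt_top hv,
      hausdorffMeasure_sphere_inter_inner_nonpos_lt_top (by rwa [norm_neg])⟩

instance isFiniteMeasure_hausdorffMeasure_sphere :
    IsFiniteMeasure (μH[finrank ℝ E - 1] : Measure (sphere (0 : E) 1)) := by
  rcases isEmpty_or_nonempty (sphere (0 : E) 1) with h | ⟨⟨v, hv⟩⟩
  · infer_instance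
  have hd : (0 : ℝ) ≤ finrank ℝ E - 1 := by
    have : 0 < finrank ℝ E :=
      Module.finrank_pos_iff_exists_ne_zero.mpr ⟨v, ne_zero_of_mem_unit_sphere ⟨v, hv⟩⟩
    have : (1 : ℝ) ≤ finrank ℝ E := by exact_mod_cast this
    linarith
  constructor
  rw [← isometry_subtype_coe.hausdorffMeasure_image (Or.inl hd), Set.image_univ,
    Subtype.range_coe]
  exact hausdorffMeasure_sphere_lt_top

open NormedSpace in
/-- `t ↦ ∫ f ∘ exp (t J) dμ` is constant since `exp (t J)` is a rotation; its derivative at `0`,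
computed under the integral sign, is the left-hand side. -/
theorem integral_fderiv_apply_skewAdjoint_eq_zero (μ : Measure (sphere (0 : E) 1))
    [IsFiniteMeasure μ] (hμ : ∀ e : E ≃ₗᵢ[ℝ] E, MeasurePreserving e.restrictSphere μ μ)
    {J : E →L[ℝ] E} (hJ : J ∈ skewAdjoint (E →L[ℝ] E)) {f : E → ℝ} (hf : ContDiff ℝ 1 f) :
    ∫ ω, fderiv ℝ f ω (J ω) ∂μ = 0 := by
  let : NormedAlgebra ℚ (E →L[ℝ] E) := .restrictScalars ℚ ℝ _
  set U : ℝ → E ≃ₗᵢ[ℝ] E := fun t =>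
    Unitary.linearIsometryEquiv ⟨exp (t • J), exp_mem_unitary_of_mem_skewAdjoint
      (skewAdjoint.smul_mem t hJ)⟩
  have hU : ∀ t x, U t x = exp (t • J) x := fun _ _ => rfl
  have hconst : (fun t : ℝ => ∫ ω, f (exp (t • J) ω) ∂μ) = fun _ => ∫ ω, f ω ∂μ := by
    funext t
    exact (hμ (U t)).integral_comp (U t).restrictSphere.toHomeomorph.measurableEmbedding
      (fun ω => f ω)
  obtain ⟨B, hB⟩ := (isCompact_sphere (0 : E) 1).exists_bound_of_continuousOn
    (hf.continuous_fderiv one_ne_zero).continuousOn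
  have hderiv : ∀ (ω : sphere (0 : E) 1) (t : ℝ), HasDerivAt (fun t => f (exp (t • J) ω))
      (fderiv ℝ f (exp (t • J) ω) ((exp (t • J) * J) ω)) t := fun ω t =>
    (hf.differentiable one_ne_zero _).hasFDerivAt.comp_hasDerivAt t
      ((ContinuousLinearMap.apply ℝ E (ω : E)).hasFDerivAt.comp_hasDerivAt t
        (hasDerivAt_exp_smul_const J t))
  have key := hasDerivAt_integral_of_dominated_loc_of_deriv_le (μ := μ) (x₀ := 0)
    (F := fun t (ω : sphere (0 : E) 1) => f (exp (t • J) ω)) (bound := fun _ => B * ‖J‖)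
    univ_mem (Eventually.of_forall fun t => ?_) ?_ ?_ ?_ (integrable_const _)
    (Eventually.of_forall fun ω t _ => hderiv ω t)
  · rw [hconst] at key
    simpa using ((hasDerivAt_const (0 : ℝ) _).unique key.2).symm
  · exact (hf.continuous.comp ((map_continuous _).comp
      continuous_subtype_val)).aestronglyMeasurable
  · exact (hf.continuous.comp ((map_continuous _).comp
      continuous_subtype_val)).integrable_of_hasCompactSupport (.of_compactSpace _)
  · exact ((hf.continuous_fderiv one_ne_zero).comp ((map_continuous _).comp
      continuous_subtype_val)).clm_apply ((map_continuous _).comp continuous_subtype_val)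
      |>.aestronglyMeasurable
  · refine Eventually.of_forall fun ω t _ => ?_
    have hω : ‖(ω : E)‖ = 1 := by simp
    have hUω : exp (t • J) (ω : E) ∈ sphere (0 : E) 1 := by
      rw [← hU, mem_sphere_zero_iff_norm, LinearIsometryEquiv.norm_map, hω]
    calc ‖fderiv ℝ f (exp (t • J) ω) ((exp (t • J) * J) ω)‖
        ≤ ‖fderiv ℝ f (exp (t • J) ω)‖ * ‖exp (t • J) (J ω)‖ :=
          ContinuousLinearMap.le_opNorm _ _
      _ ≤ B * ‖J‖ := by
        rw [← hU t (J ω), LinearIsometryEquiv.norm_map]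
        exact mul_le_mul (hB _ hUω) (by simpa [hω] using J.le_opNorm (ω : E)) (norm_nonneg _)
          ((norm_nonneg _).trans (hB _ hUω))

end Sphere

namespace MvPolynomial

variable {ι : Type*} [Fintype ι]

lemma hasFDerivAt_eval_euclidean (F : MvPolynomial ι ℝ) (v : EuclideanSpace ℝ ι) :
    HasFDerivAt (fun v : EuclideanSpace ℝ ι => eval (fun l => v l) F)
      (∑ l, eval (fun l => v l) (pderiv l F) •
        (EuclideanSpace.proj l : EuclideanSpace ℝ ι →L[ℝ] ℝ)) v := by
  classical
  induction F using MvPolynomial.induction_on with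
  | C a => simpa using hasFDerivAt_const (eval (fun l => v l) (C a)) v
  | add p q hp hq =>
    simp only [map_add, add_smul, Finset.sum_add_distrib]
    exact hp.add hq
  | mul_X p l hp =>
    simp only [map_mul, eval_X]
    refine (hp.mul (EuclideanSpace.proj l : EuclideanSpace ℝ ι →L[ℝ] ℝ).hasFDerivAt).congr_fderiv
      (ContinuousLinearMap.ext fun w => ?_)
    simp [Pi.single_apply, Finset.sum_add_distrib, add_mul, Finset.mul_sum, mul_assoc,
      apply_ite (eval _), ite_mul]

lemma contDiff_eval_euclidean (F : MvPolynomial ι ℝ) :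
    ContDiff ℝ 1 (fun v : EuclideanSpace ℝ ι => eval (fun l => v l) F) :=
  (AnalyticOnNhd.eval_continuousLinearMap'
    (fun l => (EuclideanSpace.proj l : EuclideanSpace ℝ ι →L[ℝ] ℝ)) F).contDiff

end MvPolynomial

section SphereIntegral

variable {ι : Type*} [Fintype ι] (μ : Measure (sphere (0 : EuclideanSpace ℝ ι) 1))
  [IsFiniteMeasure μ]

lemma integrable_eval_sphere (F : MvPolynomial ι ℝ) :
    Integrable (fun ω : sphere (0 : EuclideanSpace ℝ ι) 1 =>
      eval (fun l => (ω : EuclideanSpace ℝ ι) l) F) μ :=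
  ((contDiff_eval_euclidean F).continuous.comp
    continuous_subtype_val).integrable_of_hasCompactSupport (.of_compactSpace _)

noncomputable def sphereIntegral : MvPolynomial ι ℝ →ₗ[ℝ] ℝ where
  toFun F := ∫ ω, eval (fun l => (ω : EuclideanSpace ℝ ι) l) F ∂μ
  map_add' F G := by
    simp only [map_add]
    exact integral_add (integrable_eval_sphere μ F) (integrable_eval_sphere μ G)
  map_smul' c F := by
    simp only [smul_eval, RingHom.id_apply, smul_eq_mul]
    exact integral_const_mul c _

theorem isSphericalFunctional_sphereIntegral
    (hμ : ∀ e : EuclideanSpace ℝ ι ≃ₗᵢ[ℝ] EuclideanSpace ℝ ι,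
      MeasurePreserving e.restrictSphere μ μ) :
    IsSphericalFunctional (sphereIntegral μ) where
  angular i j F := by
    classical
    have h := integral_fderiv_apply_skewAdjoint_eq_zero μ hμ
      (innerSL_smulRight_sub_mem_skewAdjoint (EuclideanSpace.single i 1)
        (EuclideanSpace.single j 1)) (contDiff_eval_euclidean F)
    simp only [(hasFDerivAt_eval_euclidean F _).fderiv] at h
    rw [← sub_eq_zero, ← map_sub, ← h]
    refine integral_congr_ae (Eventually.of_forall fun ω => ?_)
    simp only [map_sub, map_mul, eval_X, sub_apply, ContinuousLinearMap.smulRight_apply,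
      coe_innerSL_apply, EuclideanSpace.inner_single_left, Real.ringHom_apply, one_mul, sum_apply,
      smul_apply, PiLp.proj_apply, PiLp.smul_apply, PiLp.single_apply, smul_eq_mul, mul_ite,
      mul_one, mul_zero, Finset.sum_ite_eq', Finset.mem_univ, if_true]
    ring
  radial F := by
    refine integral_congr_ae (Eventually.of_forall fun ω => ?_)
    have : ∑ i, (ω : EuclideanSpace ℝ ι) i ^ 2 = 1 := by
      rw [← EuclideanSpace.real_norm_sq_eq]
      simp
    simp [this]

end SphereIntegral

section Main

variable {d : ℕ}

instance : IsFiniteMeasure (sphereMeasure d) := by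
  have := isFiniteMeasure_hausdorffMeasure_sphere (E := EuclideanSpace ℝ (Fin d))
  rwa [finrank_euclideanSpace_fin] at this

theorem integral_sphereMeasure_mul_eval_inner_eq_zero (hd : 2 ≤ d) {k : ℕ}
    {P : MvPolynomial (Fin d) ℝ} (hP : P.IsHomogeneous k) (hΔ : laplacian P = 0)
    (x : EuclideanSpace ℝ (Fin d)) {q : Polynomial ℝ} (hq : q.natDegree < k) :
    ∫ ω, eval (fun j => (ω : EuclideanSpace ℝ (Fin d)) j) P *
      q.eval ⟪(ω : EuclideanSpace ℝ (Fin d)), x⟫ ∂(sphereMeasure d) = 0 := by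
  have hφ := isSphericalFunctional_sphereIntegral (sphereMeasure d)
    fun e => e.restrictSphere.measurePreserving_hausdorffMeasure _
  rw [← hφ.map_mul_aeval_eq_zero (by simpa using hd) (fun i => x i)
    (by rw [hP.euler_eq, Nat.cast_smul_eq_nsmul]) hΔ hq]
  refine integral_congr_ae (Eventually.of_forall fun ω => ?_)
  simp [eval_polynomial_aeval, PiLp.inner_apply]

lemma exists_polynomial_integral_relu_mul_pow (R : ℝ) (k' : ℕ) :
    ∃ q : Polynomial ℝ, q.natDegree ≤ k' + 2 ∧ ∀ t ∈ Set.Icc (-R) R,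
      ∫ b in Set.Ioo (-R) R, max (t - b) 0 * b ^ k' = q.eval t := by
  refine ⟨.C (1 / (k' + 1) - 1 / (k' + 2)) * .X ^ (k' + 2) +
    .C (-(-R) ^ (k' + 1) / (k' + 1)) * .X + .C ((-R) ^ (k' + 2) / (k' + 2)), by compute_degree!,
    fun t ⟨hRt, htR⟩ => ?_⟩
  have hcont : Continuous fun b : ℝ => max (t - b) 0 * b ^ k' := by fun_prop
  rw [← integral_Ioc_eq_integral_Ioo, ← intervalIntegral.integral_of_le (by linarith),
    ← intervalIntegral.integral_add_adjacent_intervals (b := t) (hcont.intervalIntegrable _ _)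
      (hcont.intervalIntegrable _ _)]
  have hright : ∫ b in t..R, max (t - b) 0 * b ^ k' = 0 := by
    refine intervalIntegral.integral_congr (g := fun _ => 0) (fun b hb => ?_) |>.trans (by simp)
    rw [Set.uIcc_of_le htR] at hb
    simp [max_eq_right (sub_nonpos.mpr hb.1)]
  have hleft : ∫ b in (-R)..t, max (t - b) 0 * b ^ k' =
      ∫ b in (-R)..t, (t * b ^ k' - b ^ (k' + 1)) := by
    refine intervalIntegral.integral_congr fun b hb => ?_
    rw [Set.uIcc_of_le hRt] at hb
    simp only [max_eq_left (sub_nonneg.mpr hb.2)]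
    ring
  rw [hright, add_zero, hleft, intervalIntegral.integral_sub
    ((continuous_const.fun_mul (continuous_pow k')).intervalIntegrable _ _)
    ((continuous_pow (k' + 1)).intervalIntegrable _ _),
    intervalIntegral.integral_const_mul, integral_pow, integral_pow]
  simp only [Polynomial.eval_add, Polynomial.eval_mul, Polynomial.eval_C, Polynomial.eval_pow,
    Polynomial.eval_X]
  push_cast
  field_simp
  ring

lemma integrableOn_sphere_prod_Ioo {f : sphere (0 : EuclideanSpace ℝ (Fin d)) 1 × ℝ → ℝ}
    (hf : Continuous f) (R : ℝ) :
    IntegrableOn f (Set.univ ×ˢ Set.Ioo (-R) R) ((sphereMeasure d).prod volume) :=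
  (hf.continuousOn.integrableOn_compact (isCompact_univ.prod isCompact_Icc)).mono_set
    (Set.prod_mono le_rfl Set.Ioo_subset_Icc_self)

lemma continuous_eval_sphere_prod (P : MvPolynomial (Fin d) ℝ) :
    Continuous fun p : sphere (0 : EuclideanSpace ℝ (Fin d)) 1 × ℝ =>
      eval (fun j => (p.1 : EuclideanSpace ℝ (Fin d)) j) P :=
  P.continuous_eval.comp (by fun_prop)

lemma setIntegral_relu_mul_eq_zero_of_mem_basicSet (hd : 2 ≤ d) {R : ℝ}
    {x : EuclideanSpace ℝ (Fin d)} (hx : ‖x‖ < R)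
    {g : sphere (0 : EuclideanSpace ℝ (Fin d)) 1 × ℝ → ℝ}
    (hg : g ∈ basicSet d) :
    ∫ p in Set.univ ×ˢ Set.Ioo (-R) R, max (⟪(p.1 : EuclideanSpace ℝ (Fin d)), x⟫ - p.2) 0 * g p
      ∂((sphereMeasure d).prod volume) = 0 := by
  obtain ⟨k, k', P, hP, hΔ, -, hk, rfl⟩ := hg
  obtain ⟨q, hq, hrelu⟩ := exists_polynomial_integral_relu_mul_pow R k'
  have hPc := continuous_eval_sphere_prod P
  rw [setIntegral_prod _ (integrableOn_sphere_prod_Ioo (by fun_prop) R), Measure.restrict_univ]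
  refine (integral_congr_ae (Eventually.of_forall fun ω => ?_)).trans
    (integral_sphereMeasure_mul_eval_inner_eq_zero hd hP hΔ x (hq.trans_lt hk))
  have hω := abs_real_inner_le_norm (ω : EuclideanSpace ℝ (Fin d)) x
  rw [norm_eq_of_mem_sphere, one_mul] at hω
  dsimp only
  rw [← hrelu _ (abs_le.mp (hω.trans hx.le)), ← integral_const_mul]
  congr 1 with b
  ring

lemma setIntegral_relu_mul_eq_zero_of_mem_span (hd : 2 ≤ d) {R : ℝ}
    {x : EuclideanSpace ℝ (Fin d)} (hx : ‖x‖ < R)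
    {g : sphere (0 : EuclideanSpace ℝ (Fin d)) 1 × ℝ → ℝ}
    (hg : g ∈ Submodule.span ℝ (basicSet d)) :
    ∫ p in Set.univ ×ˢ Set.Ioo (-R) R, max (⟪(p.1 : EuclideanSpace ℝ (Fin d)), x⟫ - p.2) 0 * g p
      ∂((sphereMeasure d).prod volume) = 0 := by
  set ψ := fun p : sphere (0 : EuclideanSpace ℝ (Fin d)) 1 × ℝ =>
    max (⟪(p.1 : EuclideanSpace ℝ (Fin d)), x⟫ - p.2) 0
  suffices Continuous g ∧ ∫ p in Set.univ ×ˢ Set.Ioo (-R) R, ψ p * g p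
      ∂((sphereMeasure d).prod volume) = 0 from this.2
  have hint : ∀ {f}, Continuous f → IntegrableOn (fun p => ψ p * f p)
      (Set.univ ×ˢ Set.Ioo (-R) R) ((sphereMeasure d).prod volume) := fun hf =>
    integrableOn_sphere_prod_Ioo (by fun_prop) R
  induction hg using Submodule.span_induction with
  | mem g hg =>
    refine ⟨?_, setIntegral_relu_mul_eq_zero_of_mem_basicSet hd hx hg⟩
    obtain ⟨k, k', P, -, -, -, -, rfl⟩ := hg
    exact (continuous_eval_sphere_prod P).mul (by fun_prop)
  | zero => simp [continuous_zero]
  | add f g _ _ hf hg =>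
    refine ⟨hf.1.add hg.1, ?_⟩
    simp only [Pi.add_apply, mul_add]
    rw [integral_add (hint hf.1) (hint hg.1), hf.2, hg.2, add_zero]
  | smul c f _ hf =>
    refine ⟨hf.1.const_smul c, ?_⟩
    simp only [Pi.smul_apply, smul_eq_mul, mul_left_comm _ c]
    rw [integral_const_mul, hf.2, mul_zero]

end Main

theorem stmt11_general (d : ℕ) (hd : 2 ≤ d) (R : ℝ)
    (α : SignedMeasure (Metric.sphere (0 : EuclideanSpace ℝ (Fin d)) 1 × ℝ))
    (h : ℕ → (Metric.sphere (0 : EuclideanSpace ℝ (Fin d)) 1 × ℝ) → ℝ)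
    (hmem : ∀ m, h m ∈ Submodule.span ℝ (basicSet d))
    (hconv : ∀ ψ : Metric.sphere (0 : EuclideanSpace ℝ (Fin d)) 1 × ℝ → ℝ,
      ContinuousOn ψ (Set.univ ×ˢ Set.Ioo (-R) R) →
      (∃ C, ∀ p ∈ Set.univ ×ˢ Set.Ioo (-R) R, |ψ p| ≤ C) →
      Tendsto (fun m => ∫ p in Set.univ ×ˢ Set.Ioo (-R) R,
          ψ p * h m p ∂((sphereMeasure d).prod volume))
        atTop (𝓝 (sInt α ψ))) :
    ∀ x ∈ Metric.ball (0 : EuclideanSpace ℝ (Fin d)) R,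
      sInt α (fun p => max (⟪(p.1 : EuclideanSpace ℝ (Fin d)), x⟫ - p.2) 0) = 0 := by
  intro x hx
  rw [mem_ball_zero_iff] at hx
  have hbound : ∀ p ∈ (Set.univ : Set (sphere (0 : EuclideanSpace ℝ (Fin d)) 1)) ×ˢ
      Set.Ioo (-R) R, |max (⟪(p.1 : EuclideanSpace ℝ (Fin d)), x⟫ - p.2) 0| ≤ ‖x‖ + R := by
    rintro ⟨ω, b⟩ ⟨-, hb⟩
    have := abs_real_inner_le_norm (ω : EuclideanSpace ℝ (Fin d)) x
    simp only [norm_eq_of_mem_sphere, one_mul] at this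
    rw [abs_of_nonneg (le_max_right _ _)]
    exact max_le (by linarith [(abs_le.mp this).2, hb.1]) (by linarith [norm_nonneg x, hb.1])
  have hlim := hconv _ (by fun_prop) ⟨_, hbound⟩
  simp only [setIntegral_relu_mul_eq_zero_of_mem_span hd hx (hmem _)] at hlim
  exact tendsto_nhds_unique hlim tendsto_const_nhds

theorem stmt11 (d : ℕ) (hd : 2 ≤ d) (R : ℝ) (hR : 0 < R)
    (α : SignedMeasure (Metric.sphere (0 : EuclideanSpace ℝ (Fin d)) 1 × ℝ))
    (hsupp : α.totalVariation
      {p : Metric.sphere (0 : EuclideanSpace ℝ (Fin d)) 1 × ℝ | p.2 ∉ Set.Ioo (-R) R} = 0)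
    (h : ℕ → (Metric.sphere (0 : EuclideanSpace ℝ (Fin d)) 1 × ℝ) → ℝ)
    (hmem : ∀ m, h m ∈ Submodule.span ℝ (basicSet d))
    (hconv : ∀ ψ : Metric.sphere (0 : EuclideanSpace ℝ (Fin d)) 1 × ℝ → ℝ,
      ContinuousOn ψ (Set.univ ×ˢ Set.Ioo (-R) R) →
      (∃ C, ∀ p ∈ Set.univ ×ˢ Set.Ioo (-R) R, |ψ p| ≤ C) →
      Tendsto (fun m => ∫ p in Set.univ ×ˢ Set.Ioo (-R) R,
          ψ p * h m p ∂((sphereMeasure d).prod volume))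
        atTop (𝓝 (sInt α ψ))) :
    ∀ x ∈ Metric.ball (0 : EuclideanSpace ℝ (Fin d)) R,
      sInt α (fun p => max (⟪(p.1 : EuclideanSpace ℝ (Fin d)), x⟫ - p.2) 0) = 0 :=
  stmt11_general d hd R α h hmem hconv
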